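/- arXiv:2201.09706 — 7 statements merged into one kernel-verified Lean document; each statement's English description precedes it below -/
import Mathlib

section
/- Fix parameters (φ,θ) and assume that at this φ all the quantities p(Y¹|φ), p(Y|φ) := ∫ p(Y|φ,θ')π₀(θ'|φ)dθ' and p(Y²|Y¹,φ) := ∫ p(Y²|φ,θ')π₁(θ'|φ)dθ' are finite and strictly positive, and that p(Z¹|φ), p(Z²|φ), p(Y¹|φ,θ), p(Y²|φ,θ) are strictly positive. Define the Cut-model loss for data (Ỹ,Z̃) and conditional prior density π(·|φ) by l^c(φ,θ;Ỹ,Z̃,π) := −log p(Z̃|φ) − log p(Ỹ|φ,θ) + log ∫ p(Ỹ|φ,θ')π(θ'|φ)dθ'. Then the Cut-model loss is prequentially additive with respect to the Cut-model belief update: l^c(φ,θ;Y,Z,π₀) = l^c(φ,θ;Y¹,Z¹,π₀) + l^c(φ,θ;Y²,Z²,π₁). -/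
open MeasureTheory Real

/-- The Cut-model loss is prequentially additive with respect to the
Cut-model belief update: `l^c(φ,θ;Y,Z,π₀) = l^c(φ,θ;Y¹,Z¹,π₀) + l^c(φ,θ;Y²,Z²,π₁)`. -/
theorem cut_loss_prequentially_additive
    {Φ Θ : Type*} [MeasurableSpace Φ] [MeasurableSpace Θ]
    (ν : Measure Θ) [SigmaFinite ν]
    -- conditional prior density π₀(θ|φ)
    (π₀ : Φ → Θ → ℝ)
    (hπ₀meas : Measurable (Function.uncurry π₀))
    (hπ₀nonneg : ∀ φ θ, 0 ≤ π₀ φ θ)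
    (hπ₀prob : ∀ φ, ∫ θ, π₀ φ θ ∂ν = 1)
    -- likelihood densities for the split data Z = (Z¹,Z²), Y = (Y¹,Y²)
    (pZ1 pZ2 : Φ → ℝ) (pY1 pY2 : Φ → Θ → ℝ)
    (hpZ1meas : Measurable pZ1) (hpZ2meas : Measurable pZ2)
    (hpY1meas : Measurable (Function.uncurry pY1))
    (hpY2meas : Measurable (Function.uncurry pY2))
    (hpZ1nonneg : ∀ φ, 0 ≤ pZ1 φ) (hpZ2nonneg : ∀ φ, 0 ≤ pZ2 φ)
    (hpY1nonneg : ∀ φ θ, 0 ≤ pY1 φ θ) (hpY2nonneg : ∀ φ θ, 0 ≤ pY2 φ θ)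
    -- updated conditional prior π₁(θ|φ) = p(Y¹|φ,θ)π₀(θ|φ)/p(Y¹|φ)
    (π₁ : Φ → Θ → ℝ)
    (hπ₁ : ∀ φ θ, π₁ φ θ = pY1 φ θ * π₀ φ θ / ∫ θ', pY1 φ θ' * π₀ φ θ' ∂ν)
    -- the Cut-model loss, as a function of the data (likelihoods) and a conditional prior:
    -- l^c(φ,θ;Ỹ,Z̃,π) = −log p(Z̃|φ) − log p(Ỹ|φ,θ) + log ∫ p(Ỹ|φ,θ')π(θ'|φ)dθ'
    (lc : (Φ → ℝ) → (Φ → Θ → ℝ) → (Φ → Θ → ℝ) → Φ → Θ → ℝ)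
    (hlc : ∀ pZt pYt pr φ θ, lc pZt pYt pr φ θ =
      - Real.log (pZt φ) - Real.log (pYt φ θ) +
        Real.log (∫ θ', pYt φ θ' * pr φ θ' ∂ν))
    -- fixed parameters
    (φ : Φ) (θ : Θ)
    -- finiteness and strict positivity of p(Y¹|φ), p(Y|φ), p(Y²|Y¹,φ) at this φ
    (h1int : Integrable (fun θ' => pY1 φ θ' * π₀ φ θ') ν)
    (h1pos : 0 < ∫ θ', pY1 φ θ' * π₀ φ θ' ∂ν)
    (hint : Integrable (fun θ' => pY1 φ θ' * pY2 φ θ' * π₀ φ θ') ν)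
    (hpos : 0 < ∫ θ', pY1 φ θ' * pY2 φ θ' * π₀ φ θ' ∂ν)
    (h2int : Integrable (fun θ' => pY2 φ θ' * π₁ φ θ') ν)
    (h2pos : 0 < ∫ θ', pY2 φ θ' * π₁ φ θ' ∂ν)
    -- strict positivity of the likelihood factors at (φ,θ)
    (hZ1pos : 0 < pZ1 φ) (hZ2pos : 0 < pZ2 φ)
    (hY1pos : 0 < pY1 φ θ) (hY2pos : 0 < pY2 φ θ) :
    lc (fun φ' => pZ1 φ' * pZ2 φ') (fun φ' θ' => pY1 φ' θ' * pY2 φ' θ') π₀ φ θ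
      = lc pZ1 pY1 π₀ φ θ + lc pZ2 pY2 π₁ φ θ := by
  set c := ∫ θ', pY1 φ θ' * π₀ φ θ' ∂ν with hc
  have key : (∫ θ', pY2 φ θ' * π₁ φ θ' ∂ν)
      = (∫ θ', pY1 φ θ' * pY2 φ θ' * π₀ φ θ' ∂ν) / c := by
    have : (fun θ' => pY2 φ θ' * π₁ φ θ')
        = fun θ' => (pY1 φ θ' * pY2 φ θ' * π₀ φ θ') / c := by
      funext θ'; rw [hπ₁]; ring
    rw [this, integral_div]
  rw [hlc, hlc, hlc, key,
    Real.log_mul (ne_of_gt hZ1pos) (ne_of_gt hZ2pos),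
    Real.log_mul (ne_of_gt hY1pos) (ne_of_gt hY2pos),
    Real.log_div (ne_of_gt hpos) (ne_of_gt h1pos)]
  ring
end

section
/- (Gibbs variational principle: the Gibbs posterior is the optimal valid belief update.) Let π₀ be a probability measure on a measurable space Ω, l : Ω → ℝ measurable with Z := ∫ exp(−l) dπ₀ ∈ (0,∞), and let p* be the probability measure with density exp(−l)/Z with respect to π₀. Then for every probability measure ν absolutely continuous with respect to π₀ such that l is ν-integrable and KL(ν‖π₀) < ∞, one has ∫ l dν + KL(ν‖π₀) ≥ −log Z, with equality if and only if ν = p*. In particular p* is the unique minimiser of the loss L(ν) := ∫ l dν + KL(ν‖π₀) over such ν. -/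
/-!
The Gibbs posterior is the tilted measure `p* = π₀.tilted (-l)`, whose log-likelihood ratio against
`π₀` is `-l - log Z`. Hence `∫ l dν + KL(ν‖π₀) = KL(ν‖p*) - log Z`, and both claims are Gibbs'
inequality `KL(ν‖p*) ≥ 0` together with its equality case `KL(ν‖p*) = 0 ↔ ν = p*`.
-/

open MeasureTheory Real InformationTheory

namespace MeasureTheory

variable {Ω : Type*} [MeasurableSpace Ω] {μ ν : Measure Ω}

section Probability

variable [IsProbabilityMeasure μ] [IsProbabilityMeasure ν]

lemma integral_llr_nonneg (hμν : μ ≪ ν) : 0 ≤ ∫ x, llr μ ν x ∂μ := by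
  rw [← toReal_klDiv_of_measure_eq hμν (by simp)]
  exact ENNReal.toReal_nonneg

lemma integral_llr_eq_zero_iff (hμν : μ ≪ ν) (h_int : Integrable (llr μ ν) μ) :
    ∫ x, llr μ ν x ∂μ = 0 ↔ μ = ν := by
  rw [← toReal_klDiv_of_measure_eq hμν (by simp), ENNReal.toReal_eq_zero_iff,
    or_iff_left (klDiv_ne_top hμν h_int), klDiv_eq_zero_iff]

end Probability

lemma integral_add_integral_llr_eq_integral_llr_tilted_neg_sub_log [IsProbabilityMeasure μ]
    [SigmaFinite ν] {f : Ω → ℝ} (hμν : μ ≪ ν) (hfμ : Integrable f μ)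
    (hfν : Integrable (fun x ↦ exp (-f x)) ν) (h_int : Integrable (llr μ ν) μ) :
    ∫ x, f x ∂μ + ∫ x, llr μ ν x ∂μ
      = ∫ x, llr μ (ν.tilted (-f ·)) x ∂μ - log (∫ x, exp (-f x) ∂ν) := by
  rw [integral_llr_tilted_right (f := (-f ·)) hμν hfμ.neg hfν h_int, integral_neg]
  ring

end MeasureTheory

theorem gibbs_posterior_is_optimal_valid_belief_update_general
    {Ω : Type*} [MeasurableSpace Ω] (π₀ : Measure Ω) [IsProbabilityMeasure π₀]
    (l : Ω → ℝ)
    -- Z := ∫ exp(−l) dπ₀ ∈ (0,∞)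
    (hZint : Integrable (fun x => Real.exp (-l x)) π₀)
    -- p* has density exp(−l)/Z with respect to π₀
    (pstar : Measure Ω)
    (hpstar : pstar = π₀.withDensity
      (fun x => ENNReal.ofReal (Real.exp (-l x) / ∫ y, Real.exp (-l y) ∂π₀))) :
    ∀ ν : Measure Ω, IsProbabilityMeasure ν → ν ≪ π₀ →
      Integrable l ν →
      -- KL(ν‖π₀) = ∫ log(dν/dπ₀) dν is finite
      Integrable (fun x => Real.log ((ν.rnDeriv π₀ x).toReal)) ν →
      ((∫ x, l x ∂ν + ∫ x, Real.log ((ν.rnDeriv π₀ x).toReal) ∂ν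
          ≥ - Real.log (∫ x, Real.exp (-l x) ∂π₀))
        ∧ ((∫ x, l x ∂ν + ∫ x, Real.log ((ν.rnDeriv π₀ x).toReal) ∂ν
          = - Real.log (∫ x, Real.exp (-l x) ∂π₀)) ↔ ν = pstar)) := by
  intro ν _ hν hlν hKL
  obtain rfl : pstar = π₀.tilted (-l ·) := hpstar
  have : IsProbabilityMeasure (π₀.tilted (-l ·)) := isProbabilityMeasure_tilted hZint
  have hν_tilted : ν ≪ π₀.tilted (-l ·) := hν.trans (absolutelyContinuous_tilted hZint)
  have hKL_tilted : Integrable (llr ν (π₀.tilted (-l ·))) ν :=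
    integrable_llr_tilted_right hν hlν.neg hKL hZint
  have hsplit : ∫ x, l x ∂ν + ∫ x, Real.log ((ν.rnDeriv π₀ x).toReal) ∂ν
      = ∫ x, llr ν (π₀.tilted (-l ·)) x ∂ν - log (∫ x, exp (-l x) ∂π₀) :=
    integral_add_integral_llr_eq_integral_llr_tilted_neg_sub_log hν hlν hZint hKL
  rw [hsplit, sub_eq_neg_self, integral_llr_eq_zero_iff hν_tilted hKL_tilted]
  exact ⟨by linarith [integral_llr_nonneg hν_tilted], Iff.rfl⟩

/-- Gibbs variational principle: for every probability measure
`ν ≪ π₀` with `l` ν-integrable and finite KL divergence,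
`∫ l dν + KL(ν‖π₀) ≥ −log Z`, with equality iff `ν = p*`, where `p*` is the
Gibbs posterior with density `exp(−l)/Z` w.r.t. `π₀` and `Z = ∫ exp(−l) dπ₀`.
In particular `p*` is the unique minimiser of `ν ↦ ∫ l dν + KL(ν‖π₀)`. -/
theorem gibbs_posterior_is_optimal_valid_belief_update
    {Ω : Type*} [MeasurableSpace Ω] (π₀ : Measure Ω) [IsProbabilityMeasure π₀]
    (l : Ω → ℝ) (hl : Measurable l)
    -- Z := ∫ exp(−l) dπ₀ ∈ (0,∞)
    (hZint : Integrable (fun x => Real.exp (-l x)) π₀)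
    (hZpos : 0 < ∫ x, Real.exp (-l x) ∂π₀)
    -- p* has density exp(−l)/Z with respect to π₀
    (pstar : Measure Ω)
    (hpstar : pstar = π₀.withDensity
      (fun x => ENNReal.ofReal (Real.exp (-l x) / ∫ y, Real.exp (-l y) ∂π₀))) :
    ∀ ν : Measure Ω, IsProbabilityMeasure ν → ν ≪ π₀ →
      Integrable l ν →
      -- KL(ν‖π₀) = ∫ log(dν/dπ₀) dν is finite
      Integrable (fun x => Real.log ((ν.rnDeriv π₀ x).toReal)) ν →
      ((∫ x, l x ∂ν + ∫ x, Real.log ((ν.rnDeriv π₀ x).toReal) ∂ν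
          ≥ - Real.log (∫ x, Real.exp (-l x) ∂π₀))
        ∧ ((∫ x, l x ∂ν + ∫ x, Real.log ((ν.rnDeriv π₀ x).toReal) ∂ν
          = - Real.log (∫ x, Real.exp (-l x) ∂π₀)) ↔ ν = pstar)) :=
  gibbs_posterior_is_optimal_valid_belief_update_general π₀ l hZint pstar hpstar
end

section
/- (δ-SMI interpolation, Cut limit.) For δ > 0 let p_δ(Y|φ,θ̃) be measurable nonnegative functions and suppose there exist constants c_δ > 0 and measurable functions ε_δ(φ,θ̃) with sup_{φ,θ̃}|ε_δ(φ,θ̃)| → 0 as δ → ∞ such that p_δ(Y|φ,θ̃) = c_δ·(1 + ε_δ(φ,θ̃)). Assume 0 < A := ∫ π₀(φ)p(Z|φ)dφ < ∞. Define m_δ(φ) := π₀(φ)p(Z|φ)·∫ p_δ(Y|φ,θ̃)π₀(θ̃|φ)dθ̃, N_δ := ∫ m_δ(φ)dφ, and the marginal δ-SMI posterior density p̃_δ(φ,θ) := [m_δ(φ)/N_δ]·π(θ|Y,φ), where π(θ|Y,φ) := p(Y|φ,θ)π₀(θ|φ)/p(Y|φ). Then for every (φ,θ) with 0 < p(Y|φ)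 < ∞, p̃_δ(φ,θ) converges, as δ → ∞, to the Cut posterior density [π₀(φ)p(Z|φ)/A]·π(θ|Y,φ). -/
open MeasureTheory Real Filter

/-- δ-SMI interpolation, Cut limit: if `p_δ(Y|φ,θ̃) = c_δ(1 + ε_δ(φ,θ̃))`
with `c_δ > 0` and `sup|ε_δ| → 0` as `δ → ∞`, then the marginal δ-SMI posterior
density converges pointwise to the Cut posterior density as `δ → ∞`. -/
theorem delta_smi_cut_limit
    {Φ Θ : Type*} [MeasurableSpace Φ] [MeasurableSpace Θ]
    (μΦ : Measure Φ) (μΘ : Measure Θ) [SigmaFinite μΦ] [SigmaFinite μΘ]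
    -- prior density π₀(φ,θ) = π₀(φ)·π₀(θ|φ)
    (π₀Φ : Φ → ℝ) (π₀c : Φ → Θ → ℝ)
    (hπ₀Φmeas : Measurable π₀Φ) (hπ₀cmeas : Measurable (Function.uncurry π₀c))
    (hπ₀Φnonneg : ∀ φ, 0 ≤ π₀Φ φ) (hπ₀cnonneg : ∀ φ θ, 0 ≤ π₀c φ θ)
    (hπ₀cprob : ∀ φ, ∫ θ, π₀c φ θ ∂μΘ = 1)
    -- likelihood densities
    (pZ : Φ → ℝ) (pY : Φ → Θ → ℝ)
    (hpZmeas : Measurable pZ) (hpYmeas : Measurable (Function.uncurry pY))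
    (hpZnonneg : ∀ φ, 0 ≤ pZ φ) (hpYnonneg : ∀ φ θ, 0 ≤ pY φ θ)
    -- smoothed likelihoods p_δ(Y|φ,θ̃), δ > 0, measurable and nonnegative
    (pδ : ℝ → Φ → Θ → ℝ)
    (hpδmeas : ∀ δ, Measurable (Function.uncurry (pδ δ)))
    (hpδnonneg : ∀ δ φ θt, 0 ≤ pδ δ φ θt)
    -- structure p_δ(Y|φ,θ̃) = c_δ·(1 + ε_δ(φ,θ̃)) with c_δ > 0
    (c : ℝ → ℝ) (hc : ∀ δ, 0 < δ → 0 < c δ)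
    (ε : ℝ → Φ → Θ → ℝ)
    (hεmeas : ∀ δ, Measurable (Function.uncurry (ε δ)))
    (hform : ∀ δ, 0 < δ → ∀ φ θt, pδ δ φ θt = c δ * (1 + ε δ φ θt))
    -- sup_{φ,θ̃} |ε_δ(φ,θ̃)| → 0 as δ → ∞
    (hεunif : ∀ η : ℝ, 0 < η → ∀ᶠ δ in atTop, ∀ φ θt, |ε δ φ θt| ≤ η)
    -- 0 < A := ∫ π₀(φ)p(Z|φ)dφ < ∞
    (A : ℝ) (hA : A = ∫ φ, π₀Φ φ * pZ φ ∂μΦ)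
    (hAint : Integrable (fun φ => π₀Φ φ * pZ φ) μΦ) (hApos : 0 < A)
    -- marginal likelihood p(Y|φ) and conditional posterior π(θ|Y,φ)
    (pYm : Φ → ℝ) (hpYm : ∀ φ, pYm φ = ∫ θ, pY φ θ * π₀c φ θ ∂μΘ)
    (πθ : Φ → Θ → ℝ) (hπθ : ∀ φ θ, πθ φ θ = pY φ θ * π₀c φ θ / pYm φ)
    -- m_δ(φ) := π₀(φ)p(Z|φ)·∫ p_δ(Y|φ,θ̃)π₀(θ̃|φ)dθ̃ and N_δ := ∫ m_δ(φ)dφ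
    (mδ : ℝ → Φ → ℝ)
    (hmδ : ∀ δ φ, mδ δ φ = π₀Φ φ * pZ φ * ∫ θt, pδ δ φ θt * π₀c φ θt ∂μΘ)
    (Nδ : ℝ → ℝ) (hNδ : ∀ δ, Nδ δ = ∫ φ, mδ δ φ ∂μΦ)
    -- the marginal δ-SMI posterior density
    (pSMI : ℝ → Φ → Θ → ℝ)
    (hpSMI : ∀ δ φ θ, pSMI δ φ θ = mδ δ φ / Nδ δ * πθ φ θ) :
    ∀ φ θ, 0 < pYm φ →
      Tendsto (fun δ => pSMI δ φ θ) atTop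
        (nhds (π₀Φ φ * pZ φ / A * πθ φ θ)) := by
  intro φ θ _
  -- abbreviations
  set B : Φ → ℝ := fun ψ => π₀Φ ψ * pZ ψ with hB
  set E : ℝ → Φ → ℝ := fun δ ψ => ∫ θt, ε δ ψ θt * π₀c ψ θt ∂μΘ with hE
  set D : ℝ → ℝ := fun δ => ∫ ψ, B ψ * E δ ψ ∂μΦ with hD
  -- π₀c ψ is integrable
  have intπ₀c : ∀ ψ, Integrable (fun θt => π₀c ψ θt) μΘ := by
    intro ψ
    by_contra h
    have h1 := hπ₀cprob ψ
    rw [integral_undef h] at h1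
    exact one_ne_zero h1.symm
  have hεψmeas : ∀ δ ψ, Measurable (fun θt => ε δ ψ θt) := fun δ ψ =>
    (hεmeas δ).of_uncurry_left
  have hπ₀cψmeas : ∀ ψ, Measurable (fun θt => π₀c ψ θt) := fun ψ =>
    hπ₀cmeas.of_uncurry_left
  -- integrability of ε·π₀c given a bound on ε
  have intεπ₀c : ∀ η : ℝ, ∀ δ, (∀ ψ θt, |ε δ ψ θt| ≤ η) → ∀ ψ,
      Integrable (fun θt => ε δ ψ θt * π₀c ψ θt) μΘ := by
    intro η δ hδ ψ
    refine Integrable.mono' ((intπ₀c ψ).const_mul η)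
      (((hεψmeas δ ψ).mul (hπ₀cψmeas ψ)).aestronglyMeasurable) (ae_of_all _ ?_)
    intro θt
    rw [norm_mul, Real.norm_eq_abs, Real.norm_eq_abs,
      abs_of_nonneg (hπ₀cnonneg ψ θt)]
    exact mul_le_mul_of_nonneg_right (hδ ψ θt) (hπ₀cnonneg ψ θt)
  -- bound on E given a bound on ε
  have hEbound : ∀ η : ℝ, 0 ≤ η → ∀ δ, (∀ ψ θt, |ε δ ψ θt| ≤ η) → ∀ ψ,
      |E δ ψ| ≤ η := by
    intro η hη δ hδ ψ
    have h1 : ‖∫ θt, ε δ ψ θt * π₀c ψ θt ∂μΘ‖ ≤ ∫ θt, η * π₀c ψ θt ∂μΘ := by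
      refine norm_integral_le_of_norm_le ((intπ₀c ψ).const_mul η) (ae_of_all _ ?_)
      intro θt
      rw [norm_mul, Real.norm_eq_abs, Real.norm_eq_abs,
        abs_of_nonneg (hπ₀cnonneg ψ θt)]
      exact mul_le_mul_of_nonneg_right (hδ ψ θt) (hπ₀cnonneg ψ θt)
    rw [integral_const_mul, hπ₀cprob ψ, mul_one] at h1
    simpa [hE, Real.norm_eq_abs] using h1
  -- E δ is strongly measurable in ψ
  have hEmeas : ∀ δ, StronglyMeasurable (fun ψ => E δ ψ) := by
    intro δ
    have : StronglyMeasurable (fun p : Φ × Θ => ε δ p.1 p.2 * π₀c p.1 p.2) :=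
      ((hεmeas δ).mul hπ₀cmeas).stronglyMeasurable
    exact this.integral_prod_right'
  -- integrability of B·E given a bound on ε
  have intBE : ∀ η : ℝ, ∀ δ, (∀ ψ θt, |ε δ ψ θt| ≤ η) → 0 ≤ η →
      Integrable (fun ψ => B ψ * E δ ψ) μΦ := by
    intro η δ hδ hη
    refine Integrable.mono' (hAint.mul_const η)
      (hAint.aestronglyMeasurable.mul (hEmeas δ).aestronglyMeasurable)
      (ae_of_all _ ?_)
    intro ψ
    have hBnn : 0 ≤ B ψ := mul_nonneg (hπ₀Φnonneg ψ) (hpZnonneg ψ)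
    rw [norm_mul, Real.norm_eq_abs, Real.norm_eq_abs, abs_of_nonneg hBnn]
    exact mul_le_mul_of_nonneg_left (hEbound η hη δ hδ ψ) hBnn
  -- bound on D
  have hDbound : ∀ η : ℝ, 0 ≤ η → ∀ δ, (∀ ψ θt, |ε δ ψ θt| ≤ η) →
      |D δ| ≤ η * A := by
    intro η hη δ hδ
    have h1 : ‖∫ ψ, B ψ * E δ ψ ∂μΦ‖ ≤ ∫ ψ, B ψ * η ∂μΦ := by
      refine norm_integral_le_of_norm_le (hAint.mul_const η) (ae_of_all _ ?_)
      intro ψ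
      have hBnn : 0 ≤ B ψ := mul_nonneg (hπ₀Φnonneg ψ) (hpZnonneg ψ)
      rw [norm_mul, Real.norm_eq_abs, Real.norm_eq_abs, abs_of_nonneg hBnn]
      exact mul_le_mul_of_nonneg_left (hEbound η hη δ hδ ψ) hBnn
    rw [integral_mul_const, ← hA] at h1
    rw [mul_comm η A]
    simpa [hD, Real.norm_eq_abs] using h1
  -- E δ φ → 0
  have hE0 : Tendsto (fun δ => E δ φ) atTop (nhds 0) := by
    rw [tendsto_iff_dist_tendsto_zero]
    rw [← tendsto_iff_dist_tendsto_zero]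
    rw [NormedAddCommGroup.tendsto_nhds_zero]
    intro η hη
    filter_upwards [hεunif (η/2) (by positivity)] with δ hδ
    have := hEbound (η/2) (by positivity) δ hδ φ
    rw [Real.norm_eq_abs]
    linarith
  -- D → 0
  have hD0 : Tendsto D atTop (nhds 0) := by
    rw [NormedAddCommGroup.tendsto_nhds_zero]
    intro η hη
    filter_upwards [hεunif (η / (2 * A)) (by positivity)] with δ hδ
    have := hDbound (η / (2 * A)) (by positivity) δ hδ
    have hA2 : η / (2 * A) * A = η / 2 := by field_simp
    rw [Real.norm_eq_abs]
    rw [hA2] at this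
    linarith
  -- eventual equality of the ratio
  have heq : (fun δ => B φ * (1 + E δ φ) / (A + D δ)) =ᶠ[atTop]
      (fun δ => mδ δ φ / Nδ δ) := by
    filter_upwards [hεunif 1 one_pos, eventually_gt_atTop (0:ℝ)] with δ hδε hδpos
    have hcpos := hc δ hδpos
    -- inner integral
    have hinner : ∀ ψ, ∫ θt, pδ δ ψ θt * π₀c ψ θt ∂μΘ = c δ * (1 + E δ ψ) := by
      intro ψ
      calc ∫ θt, pδ δ ψ θt * π₀c ψ θt ∂μΘ
          = ∫ θt, c δ * (π₀c ψ θt + ε δ ψ θt * π₀c ψ θt) ∂μΘ := by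
            congr 1; funext θt; rw [hform δ hδpos]; ring
        _ = c δ * ∫ θt, (π₀c ψ θt + ε δ ψ θt * π₀c ψ θt) ∂μΘ :=
            integral_const_mul _ _
        _ = c δ * (1 + E δ ψ) := by
            rw [integral_add (intπ₀c ψ) (intεπ₀c 1 δ hδε ψ), hπ₀cprob ψ]
    have hm : ∀ ψ, mδ δ ψ = c δ * (B ψ + B ψ * E δ ψ) := by
      intro ψ; rw [hmδ, hinner ψ]; simp only [hB]; ring
    have hN : Nδ δ = c δ * (A + D δ) := by
      rw [hNδ]
      calc ∫ ψ, mδ δ ψ ∂μΦ = ∫ ψ, c δ * (B ψ + B ψ * E δ ψ) ∂μΦ := by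
            congr 1; funext ψ; exact hm ψ
        _ = c δ * ∫ ψ, (B ψ + B ψ * E δ ψ) ∂μΦ := integral_const_mul _ _
        _ = c δ * (A + D δ) := by
            rw [integral_add hAint (intBE 1 δ hδε zero_le_one), ← hA, hD]
    rw [hm φ, hN, show c δ * (B φ + B φ * E δ φ) = c δ * (B φ * (1 + E δ φ)) by ring,
      mul_div_mul_left _ _ (ne_of_gt hcpos)]
  -- limit of the ratio
  have hratio : Tendsto (fun δ => mδ δ φ / Nδ δ) atTop (nhds (B φ / A)) := by
    have h1 : Tendsto (fun δ => B φ * (1 + E δ φ) / (A + D δ)) atTop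
        (nhds (B φ * (1 + 0) / (A + 0))) := by
      refine Tendsto.div (Tendsto.mul tendsto_const_nhds
        (Tendsto.add tendsto_const_nhds hE0))
        (Tendsto.add tendsto_const_nhds hD0) ?_
      simpa using ne_of_gt hApos
    simp only [add_zero, mul_one] at h1
    exact h1.congr' heq
  have := hratio.mul_const (πθ φ θ)
  refine this.congr ?_
  intro δ
  rw [hpSMI]
end

section
/- (η-SMI loss is prequentially additive with respect to the η-SMI belief update.) Fix η ∈ [0,1] and extended parameters (φ,θ̃,θ), and assume that at this φ the quantities p(Y¹|φ), p(Y|φ) := ∫ p(Y|φ,θ')π₀(θ'|φ)dθ' and p(Y²|Y¹,φ) := ∫ p(Y²|φ,θ')π₁(θ'|φ)dθ' are finite and strictly positive, and that p(Z¹|φ), p(Z²|φ), p(Y¹|φ,θ), p(Y²|φ,θ), p(Y¹|φ,θ̃), p(Y²|φ,θ̃) are strictly positive. Define the η-SMI loss for data (Ỹ,Z̃) and conditional prior π(·|φ) by l^s(φ,θ̃,θ;Ỹ,Z̃,π) := −log p(Z̃|φ) − log p(Ỹ|φ,θ) − η·log p(Ỹ|φ,θ̃) + log ∫ p(Ỹ|φ,θ')π(θ'|φ)dθ'.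 Then l^s(φ,θ̃,θ;Y,Z,π₀) = l^s(φ,θ̃,θ;Y¹,Z¹,π₀) + l^s(φ,θ̃,θ;Y²,Z²,π₁). -/
open MeasureTheory Real

/-- The η-SMI loss is prequentially additive with respect to the
η-SMI belief update: `l^s(φ,θ̃,θ;Y,Z,π₀) = l^s(φ,θ̃,θ;Y¹,Z¹,π₀) + l^s(φ,θ̃,θ;Y²,Z²,π₁)`. -/
theorem eta_smi_loss_prequentially_additive
    {Φ Θ : Type*} [MeasurableSpace Φ] [MeasurableSpace Θ]
    (ν : Measure Θ) [SigmaFinite ν]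
    (η : ℝ) (hη0 : 0 ≤ η) (hη1 : η ≤ 1)
    -- conditional prior density π₀(θ|φ)
    (π₀ : Φ → Θ → ℝ)
    (hπ₀meas : Measurable (Function.uncurry π₀))
    (hπ₀nonneg : ∀ φ θ, 0 ≤ π₀ φ θ)
    (hπ₀prob : ∀ φ, ∫ θ, π₀ φ θ ∂ν = 1)
    -- likelihood densities for the split data Z = (Z¹,Z²), Y = (Y¹,Y²)
    (pZ1 pZ2 : Φ → ℝ) (pY1 pY2 : Φ → Θ → ℝ)
    (hpZ1meas : Measurable pZ1) (hpZ2meas : Measurable pZ2)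
    (hpY1meas : Measurable (Function.uncurry pY1))
    (hpY2meas : Measurable (Function.uncurry pY2))
    (hpZ1nonneg : ∀ φ, 0 ≤ pZ1 φ) (hpZ2nonneg : ∀ φ, 0 ≤ pZ2 φ)
    (hpY1nonneg : ∀ φ θ, 0 ≤ pY1 φ θ) (hpY2nonneg : ∀ φ θ, 0 ≤ pY2 φ θ)
    -- updated conditional prior π₁(θ|φ) = p(Y¹|φ,θ)π₀(θ|φ)/p(Y¹|φ)
    (π₁ : Φ → Θ → ℝ)
    (hπ₁ : ∀ φ θ, π₁ φ θ = pY1 φ θ * π₀ φ θ / ∫ θ', pY1 φ θ' * π₀ φ θ' ∂ν)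
    -- the η-SMI loss, as a function of the data (likelihoods) and a conditional prior:
    -- l^s(φ,θ̃,θ;Ỹ,Z̃,π) = −log p(Z̃|φ) − log p(Ỹ|φ,θ) − η·log p(Ỹ|φ,θ̃)
    --                     + log ∫ p(Ỹ|φ,θ')π(θ'|φ)dθ'
    (ls : (Φ → ℝ) → (Φ → Θ → ℝ) → (Φ → Θ → ℝ) → Φ → Θ → Θ → ℝ)
    (hls : ∀ pZt pYt pr φ θt θ, ls pZt pYt pr φ θt θ =
      - Real.log (pZt φ) - Real.log (pYt φ θ) - η * Real.log (pYt φ θt) +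
        Real.log (∫ θ', pYt φ θ' * pr φ θ' ∂ν))
    -- fixed extended parameters (φ, θ̃, θ)
    (φ : Φ) (θt θ : Θ)
    -- finiteness and strict positivity of p(Y¹|φ), p(Y|φ), p(Y²|Y¹,φ) at this φ
    (h1int : Integrable (fun θ' => pY1 φ θ' * π₀ φ θ') ν)
    (h1pos : 0 < ∫ θ', pY1 φ θ' * π₀ φ θ' ∂ν)
    (hint : Integrable (fun θ' => pY1 φ θ' * pY2 φ θ' * π₀ φ θ') ν)
    (hpos : 0 < ∫ θ', pY1 φ θ' * pY2 φ θ' * π₀ φ θ' ∂ν)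
    (h2int : Integrable (fun θ' => pY2 φ θ' * π₁ φ θ') ν)
    (h2pos : 0 < ∫ θ', pY2 φ θ' * π₁ φ θ' ∂ν)
    -- strict positivity of the likelihood factors at (φ,θ) and (φ,θ̃)
    (hZ1pos : 0 < pZ1 φ) (hZ2pos : 0 < pZ2 φ)
    (hY1pos : 0 < pY1 φ θ) (hY2pos : 0 < pY2 φ θ)
    (hY1tpos : 0 < pY1 φ θt) (hY2tpos : 0 < pY2 φ θt) :
    ls (fun φ' => pZ1 φ' * pZ2 φ') (fun φ' θ' => pY1 φ' θ' * pY2 φ' θ') π₀ φ θt θ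
      = ls pZ1 pY1 π₀ φ θt θ + ls pZ2 pY2 π₁ φ θt θ := by
  have hc : (∫ θ', pY1 φ θ' * π₀ φ θ' ∂ν) ≠ 0 := ne_of_gt h1pos
  have hkey : ∫ θ', pY2 φ θ' * π₁ φ θ' ∂ν
      = (∫ θ', pY1 φ θ' * pY2 φ θ' * π₀ φ θ' ∂ν) / (∫ θ', pY1 φ θ' * π₀ φ θ' ∂ν) := by
    rw [show (fun θ' => pY2 φ θ' * π₁ φ θ')
        = fun θ' => (pY1 φ θ' * pY2 φ θ' * π₀ φ θ') / (∫ θ'', pY1 φ θ'' * π₀ φ θ'' ∂ν) from ?_]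
    · rw [integral_div]
    · funext θ'
      rw [hπ₁]
      ring
  rw [hls, hls, hls, Real.log_mul (ne_of_gt hZ1pos) (ne_of_gt hZ2pos),
    Real.log_mul (ne_of_gt hY1pos) (ne_of_gt hY2pos),
    Real.log_mul (ne_of_gt hY1tpos) (ne_of_gt hY2tpos), hkey,
    Real.log_div (ne_of_gt hpos) hc]
  ring
end

section
/- (δ-SMI loss is prequentially additive with respect to the δ-SMI belief update.) Fix δ > 0 and extended parameters (φ,θ̃,θ). Suppose the smoothed likelihood factorizes across the data split: p_δ(Y|φ,θ̃) = p_δ(Y¹|φ,θ̃)·p_δ(Y²|φ,θ̃), with all three values strictly positive at (φ,θ̃). Assume further that at this φ the quantities p(Y¹|φ), p(Y|φ) := ∫ p(Y|φ,θ')π₀(θ'|φ)dθ' and p(Y²|Y¹,φ) := ∫ p(Y²|φ,θ')π₁(θ'|φ)dθ' are finite and strictly positive, and that p(Z¹|φ), p(Z²|φ), p(Y¹|φ,θ), p(Y²|φ,θ) are strictly positive. Define the δ-SMI loss for data (Ỹ,Z̃) and conditional prior π(·|φ) by l^k(φ,θ̃,θ;Ỹ,Z̃,π) := −log p(Z̃|φ)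 − log p(Ỹ|φ,θ) − log p_δ(Ỹ|φ,θ̃) + log ∫ p(Ỹ|φ,θ')π(θ'|φ)dθ'. Then l^k(φ,θ̃,θ;Y,Z,π₀) = l^k(φ,θ̃,θ;Y¹,Z¹,π₀) + l^k(φ,θ̃,θ;Y²,Z²,π₁). -/
open MeasureTheory Real

/-- The δ-SMI loss is prequentially additive with respect to the
δ-SMI belief update: `l^k(φ,θ̃,θ;Y,Z,π₀) = l^k(φ,θ̃,θ;Y¹,Z¹,π₀) + l^k(φ,θ̃,θ;Y²,Z²,π₁)`. -/
theorem delta_smi_loss_prequentially_additive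
    {Φ Θ : Type*} [MeasurableSpace Φ] [MeasurableSpace Θ]
    (ν : Measure Θ) [SigmaFinite ν]
    (δ : ℝ) (hδ : 0 < δ)
    -- conditional prior density π₀(θ|φ)
    (π₀ : Φ → Θ → ℝ)
    (hπ₀meas : Measurable (Function.uncurry π₀))
    (hπ₀nonneg : ∀ φ θ, 0 ≤ π₀ φ θ)
    (hπ₀prob : ∀ φ, ∫ θ, π₀ φ θ ∂ν = 1)
    -- likelihood densities for the split data Z = (Z¹,Z²), Y = (Y¹,Y²)
    (pZ1 pZ2 : Φ → ℝ) (pY1 pY2 : Φ → Θ → ℝ)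
    (hpZ1meas : Measurable pZ1) (hpZ2meas : Measurable pZ2)
    (hpY1meas : Measurable (Function.uncurry pY1))
    (hpY2meas : Measurable (Function.uncurry pY2))
    (hpZ1nonneg : ∀ φ, 0 ≤ pZ1 φ) (hpZ2nonneg : ∀ φ, 0 ≤ pZ2 φ)
    (hpY1nonneg : ∀ φ θ, 0 ≤ pY1 φ θ) (hpY2nonneg : ∀ φ θ, 0 ≤ pY2 φ θ)
    -- kernel-smoothed likelihoods p_δ for the whole Y data and for the split Y¹, Y²
    (pδY pδY1 pδY2 : Φ → Θ → ℝ)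
    (hpδYmeas : Measurable (Function.uncurry pδY))
    (hpδY1meas : Measurable (Function.uncurry pδY1))
    (hpδY2meas : Measurable (Function.uncurry pδY2))
    (hpδYnonneg : ∀ φ θ, 0 ≤ pδY φ θ)
    (hpδY1nonneg : ∀ φ θ, 0 ≤ pδY1 φ θ) (hpδY2nonneg : ∀ φ θ, 0 ≤ pδY2 φ θ)
    -- updated conditional prior π₁(θ|φ) = p(Y¹|φ,θ)π₀(θ|φ)/p(Y¹|φ)
    (π₁ : Φ → Θ → ℝ)
    (hπ₁ : ∀ φ θ, π₁ φ θ = pY1 φ θ * π₀ φ θ / ∫ θ', pY1 φ θ' * π₀ φ θ' ∂ν)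
    -- the δ-SMI loss, as a function of the data (likelihoods, smoothed likelihood)
    -- and a conditional prior:
    -- l^k(φ,θ̃,θ;Ỹ,Z̃,π) = −log p(Z̃|φ) − log p(Ỹ|φ,θ) − log p_δ(Ỹ|φ,θ̃)
    --                     + log ∫ p(Ỹ|φ,θ')π(θ'|φ)dθ'
    (lk : (Φ → ℝ) → (Φ → Θ → ℝ) → (Φ → Θ → ℝ) → (Φ → Θ → ℝ) → Φ → Θ → Θ → ℝ)
    (hlk : ∀ pZt pYt pδt pr φ θt θ, lk pZt pYt pδt pr φ θt θ =
      - Real.log (pZt φ) - Real.log (pYt φ θ) - Real.log (pδt φ θt) +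
        Real.log (∫ θ', pYt φ θ' * pr φ θ' ∂ν))
    -- fixed extended parameters (φ, θ̃, θ)
    (φ : Φ) (θt θ : Θ)
    -- the smoothed likelihood factorizes across the data split, all factors positive at (φ,θ̃)
    (hfac : pδY φ θt = pδY1 φ θt * pδY2 φ θt)
    (hpδYpos : 0 < pδY φ θt) (hpδY1pos : 0 < pδY1 φ θt) (hpδY2pos : 0 < pδY2 φ θt)
    -- finiteness and strict positivity of p(Y¹|φ), p(Y|φ), p(Y²|Y¹,φ) at this φ
    (h1int : Integrable (fun θ' => pY1 φ θ' * π₀ φ θ') ν)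
    (h1pos : 0 < ∫ θ', pY1 φ θ' * π₀ φ θ' ∂ν)
    (hint : Integrable (fun θ' => pY1 φ θ' * pY2 φ θ' * π₀ φ θ') ν)
    (hpos : 0 < ∫ θ', pY1 φ θ' * pY2 φ θ' * π₀ φ θ' ∂ν)
    (h2int : Integrable (fun θ' => pY2 φ θ' * π₁ φ θ') ν)
    (h2pos : 0 < ∫ θ', pY2 φ θ' * π₁ φ θ' ∂ν)
    -- strict positivity of the likelihood factors at (φ,θ)
    (hZ1pos : 0 < pZ1 φ) (hZ2pos : 0 < pZ2 φ)
    (hY1pos : 0 < pY1 φ θ) (hY2pos : 0 < pY2 φ θ) :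
    lk (fun φ' => pZ1 φ' * pZ2 φ') (fun φ' θ' => pY1 φ' θ' * pY2 φ' θ') pδY π₀ φ θt θ
      = lk pZ1 pY1 pδY1 π₀ φ θt θ + lk pZ2 pY2 pδY2 π₁ φ θt θ := by
  set c := ∫ θ', pY1 φ θ' * π₀ φ θ' ∂ν with hc
  set I := ∫ θ', pY1 φ θ' * pY2 φ θ' * π₀ φ θ' ∂ν with hI
  have hπ₁int : (∫ θ', pY2 φ θ' * π₁ φ θ' ∂ν) = I / c := by
    have : ∀ θ', pY2 φ θ' * π₁ φ θ' = (pY1 φ θ' * pY2 φ θ' * π₀ φ θ') / c := by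
      intro θ'; rw [hπ₁]; ring
    simp_rw [this]
    rw [integral_div]
  rw [hlk, hlk, hlk]
  have hlogI : Real.log I = Real.log c + Real.log (I / c) := by
    rw [← Real.log_mul (ne_of_gt h1pos) (by positivity)]
    congr 1
    field_simp
  rw [Real.log_mul (ne_of_gt hZ1pos) (ne_of_gt hZ2pos),
    Real.log_mul (ne_of_gt hY1pos) (ne_of_gt hY2pos),
    hfac, Real.log_mul (ne_of_gt hpδY1pos) (ne_of_gt hpδY2pos),
    hπ₁int, hlogI]
  have hIpos : (0:ℝ) < I / c := hπ₁int ▸ h2pos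
  ring
end

section
/- (Equivalence of power-tempering and Gaussian-kernel smoothing for a normal likelihood.) Let σ > 0, δ > 0 and set η := σ²/(σ² + δ²) ∈ (0,1). Then: (i) for all μ, y ∈ ℝ, the Gaussian-kernel smoothed likelihood satisfies ∫_ℝ gaussianPDF(μ, σ², t)·gaussianPDF(0, δ², y − t) dt = gaussianPDF(μ, σ² + δ², y); and (ii) for all μ, y ∈ ℝ, gaussianPDF(μ, σ², y)^η = c · gaussianPDF(μ, σ² + δ², y) with the constant c = (2πσ²)^{(1−η)/2}·η^{−1/2} not depending on y or μ. Hence, for a normal observation model, tempering the likelihood to the power η and smoothing it with a Gaussian kernel of variance δ² yield likelihoods proportional as functions of the parameter mean μ, so η-SMI and δ-SMI coincide in the normal model. -/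
open MeasureTheory Real

/-- The density at `x` of the normal distribution with mean `m` and variance `v`. -/
noncomputable def gaussianPDF (m v x : ℝ) : ℝ :=
  (Real.sqrt (2 * Real.pi * v))⁻¹ * Real.exp (-((x - m) ^ 2) / (2 * v))

/-- Equivalence of power-tempering and Gaussian-kernel smoothing for
a normal likelihood: with `η = σ²/(σ²+δ²)`,
(i) the Gaussian-kernel smoothed likelihood satisfies
`∫ gaussianPDF(μ,σ²,t)·gaussianPDF(0,δ²,y−t) dt = gaussianPDF(μ,σ²+δ²,y)`; and
(ii) `gaussianPDF(μ,σ²,y)^η = c · gaussianPDF(μ,σ²+δ²,y)` with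
`c = (2πσ²)^{(1−η)/2}·η^{−1/2}` independent of `y` and `μ`.
Hence η-SMI and δ-SMI coincide in the normal model. -/
theorem power_tempering_eq_gaussian_smoothing
    (σ δ η : ℝ) (hσ : 0 < σ) (hδ : 0 < δ)
    (hη : η = σ ^ 2 / (σ ^ 2 + δ ^ 2)) :
    (∀ μ y : ℝ,
      ∫ t : ℝ, gaussianPDF μ (σ ^ 2) t * gaussianPDF 0 (δ ^ 2) (y - t)
        = gaussianPDF μ (σ ^ 2 + δ ^ 2) y)
    ∧ (∀ μ y : ℝ,
      gaussianPDF μ (σ ^ 2) y ^ η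
        = (2 * Real.pi * σ ^ 2) ^ ((1 - η) / 2) * η ^ (-(1 : ℝ) / 2)
            * gaussianPDF μ (σ ^ 2 + δ ^ 2) y) := by
  have hv : (0:ℝ) < σ ^ 2 := by positivity
  have hw : (0:ℝ) < δ ^ 2 := by positivity
  have hA : (0:ℝ) < σ ^ 2 + δ ^ 2 := by positivity
  have hπ : (0:ℝ) < Real.pi := Real.pi_pos
  constructor
  · intro μ y
    set b : ℝ := (σ ^ 2 + δ ^ 2) / (2 * σ ^ 2 * δ ^ 2) with hbdef
    have hb : 0 < b := by positivity
    set m : ℝ := (δ ^ 2 * μ + σ ^ 2 * y) / (σ ^ 2 + δ ^ 2) with hmdef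
    set C : ℝ := (Real.sqrt (2 * Real.pi * σ ^ 2))⁻¹ * (Real.sqrt (2 * Real.pi * δ ^ 2))⁻¹ *
      Real.exp (-((y - μ) ^ 2) / (2 * (σ ^ 2 + δ ^ 2))) with hCdef
    have key : ∀ t : ℝ, gaussianPDF μ (σ ^ 2) t * gaussianPDF 0 (δ ^ 2) (y - t)
        = C * Real.exp (-b * (t - m) ^ 2) := by
      intro t
      unfold gaussianPDF
      have hexp : -(t - μ) ^ 2 / (2 * σ ^ 2) + -(y - t - 0) ^ 2 / (2 * δ ^ 2)
          = -(y - μ) ^ 2 / (2 * (σ ^ 2 + δ ^ 2)) + -b * (t - m) ^ 2 := by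
        rw [hbdef, hmdef]
        field_simp
        ring
      rw [hCdef, mul_mul_mul_comm, ← Real.exp_add, hexp, Real.exp_add]
      ring
    simp only [key]
    rw [MeasureTheory.integral_const_mul]
    have hshift : ∫ t : ℝ, Real.exp (-b * (t - m) ^ 2) = ∫ t : ℝ, Real.exp (-b * t ^ 2) :=
      integral_sub_right_eq_self (μ := volume) (fun t => Real.exp (-b * t ^ 2)) m
    rw [hshift, integral_gaussian]
    have hconst : (Real.sqrt (2 * Real.pi * σ ^ 2))⁻¹ * (Real.sqrt (2 * Real.pi * δ ^ 2))⁻¹ *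
        Real.sqrt (Real.pi / b) = (Real.sqrt (2 * Real.pi * (σ ^ 2 + δ ^ 2)))⁻¹ := by
      rw [← Real.sqrt_inv, ← Real.sqrt_inv, ← Real.sqrt_mul (by positivity),
        ← Real.sqrt_mul (by positivity), ← Real.sqrt_inv]
      congr 1
      rw [hbdef]
      field_simp
    unfold gaussianPDF
    rw [hCdef, ← hconst]
    ring
  · intro μ y
    have hηpos : 0 < η := by rw [hη]; positivity
    have hP : (0:ℝ) < 2 * Real.pi * σ ^ 2 := by positivity
    have hQ : (0:ℝ) < 2 * Real.pi * (σ ^ 2 + δ ^ 2) := by positivity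
    have hQP : 2 * Real.pi * (σ ^ 2 + δ ^ 2) = (2 * Real.pi * σ ^ 2) * η⁻¹ := by
      rw [hη]; field_simp
    have hE : -(y - μ) ^ 2 / (2 * σ ^ 2) * η = -(y - μ) ^ 2 / (2 * (σ ^ 2 + δ ^ 2)) := by
      rw [hη]; field_simp
    unfold gaussianPDF
    rw [Real.sqrt_eq_rpow, Real.sqrt_eq_rpow, ← Real.rpow_neg hP.le, ← Real.rpow_neg hQ.le,
      Real.mul_rpow (by positivity) (Real.exp_nonneg _), ← Real.rpow_mul hP.le,
      ← Real.exp_mul, hE, hQP, Real.mul_rpow hP.le (by positivity),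
      Real.inv_rpow hηpos.le, ← Real.rpow_neg hηpos.le]
    rw [neg_neg]
    have h1 : (2 * Real.pi * σ ^ 2) ^ ((1 - η) / 2 : ℝ) * (2 * Real.pi * σ ^ 2) ^ (-(1 / 2) : ℝ)
        = (2 * Real.pi * σ ^ 2) ^ (-(1 / 2) * η : ℝ) := by
      rw [← Real.rpow_add hP]
      congr 1
      ring
    have h2 : η ^ (-1 / 2 : ℝ) * η ^ (1 / 2 : ℝ) = 1 := by
      rw [← Real.rpow_add hηpos]
      norm_num
    calc (2 * Real.pi * σ ^ 2) ^ (-(1 / 2) * η : ℝ) *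
          Real.exp (-(y - μ) ^ 2 / (2 * (σ ^ 2 + δ ^ 2)))
        = ((2 * Real.pi * σ ^ 2) ^ ((1 - η) / 2 : ℝ) * (2 * Real.pi * σ ^ 2) ^ (-(1 / 2) : ℝ)) *
            (η ^ (-1 / 2 : ℝ) * η ^ (1 / 2 : ℝ)) *
            Real.exp (-(y - μ) ^ 2 / (2 * (σ ^ 2 + δ ^ 2))) := by rw [h1, h2]; ring
      _ = (2 * Real.pi * σ ^ 2) ^ ((1 - η) / 2 : ℝ) * η ^ (-1 / 2 : ℝ) *
            ((2 * Real.pi * σ ^ 2) ^ (-(1 / 2) : ℝ) * η ^ (1 / 2 : ℝ) *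
              Real.exp (-(y - μ) ^ 2 / (2 * (σ ^ 2 + δ ^ 2)))) := by ring
end

section
/- (Normal biased-data example: marginal δ-SMI posterior for φ.) Let n, m ≥ 1, σ_y, σ_z, σ_θ > 0, δ ≥ 0, data Y₁,…,Y_n, Z₁,…,Z_m ∈ ℝ with means Ȳ, Z̄. Set λ := (m/σ_z²)/(m/σ_z² + n/(σ_y² + δ² + nσ_θ²)), μ_δ := λZ̄ + (1 − λ)Ȳ and σ_δ² := λσ_z²/m. Then there exists a constant c > 0 (not depending on φ) such that for every φ ∈ ℝ: [∏_{j=1}^{m} gaussianPDF(φ, σ_z², Z_j)] · ∫_ℝ [∏_{i=1}^{n} gaussianPDF(φ + θ̃, σ_y² + δ², Yᵢ)] · gaussianPDF(0, σ_θ², θ̃) dθ̃ = c · gaussianPDF(μ_δ, σ_δ², φ). -/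
/-!
Everything is Gaussian in `φ`. A product of `N` Gaussian densities with common variance `v`,
viewed as a function of their common mean, is proportional to the `N(ȳ, v/N)` density. So the
`Z`-factor is `∝ gaussianPDF Z̄ (σz²/m) φ`, the `Y`-factor is `∝ gaussianPDF Ȳ (vy/n) (φ + θ̃)`
with `vy = σy² + δ²`, and integrating out `θ̃ ∼ N(0, σθ²)` convolves the latter into
`gaussianPDF Ȳ (vy/n + σθ²) φ`. The product of two Gaussian densities in `φ` is again one, with
precision the sum `m/σz² + n/(vy + nσθ²)` of the precisions and mean their precision-weighted
average `λ Z̄ + (1 - λ) Ȳ`.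
-/

open MeasureTheory Real

lemma gaussianPDF_pos {v : ℝ} (hv : 0 < v) (m x : ℝ) : 0 < gaussianPDF m v x := by
  unfold gaussianPDF; positivity

lemma gaussianPDF_add (m v x y : ℝ) : gaussianPDF m v (x + y) = gaussianPDF (m - x) v y := by
  unfold gaussianPDF; ring_nf

lemma gaussianPDF_eq_gaussianPDFReal {v : ℝ} (hv : 0 ≤ v) (m : ℝ) :
    gaussianPDF m v = ProbabilityTheory.gaussianPDFReal m v.toNNReal := by
  ext x
  simp [gaussianPDF, ProbabilityTheory.gaussianPDFReal, Real.coe_toNNReal _ hv]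

lemma integral_gaussianPDF {v : ℝ} (hv : 0 < v) (m : ℝ) : ∫ x, gaussianPDF m v x = 1 := by
  rw [gaussianPDF_eq_gaussianPDFReal hv.le]
  exact ProbabilityTheory.integral_gaussianPDFReal_eq_one m (by simpa using hv)

lemma gaussianPDF_mul_gaussianPDF {v₁ v₂ : ℝ} (hv₁ : 0 < v₁) (hv₂ : 0 < v₂) (m₁ m₂ x : ℝ) :
    gaussianPDF m₁ v₁ x * gaussianPDF m₂ v₂ x =
      gaussianPDF m₁ (v₁ + v₂) m₂ *
        gaussianPDF ((m₁ * v₂ + m₂ * v₁) / (v₁ + v₂)) (v₁ * v₂ / (v₁ + v₂)) x := by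
  have hsqrt : √(2 * π * v₁) * √(2 * π * v₂) =
      √(2 * π * (v₁ + v₂)) * √(2 * π * (v₁ * v₂ / (v₁ + v₂))) := by
    rw [← Real.sqrt_mul (by positivity), ← Real.sqrt_mul (by positivity)]
    congr 1
    field_simp
  unfold gaussianPDF
  rw [mul_mul_mul_comm, ← mul_inv, hsqrt, mul_mul_mul_comm, ← mul_inv, ← Real.exp_add,
    ← Real.exp_add]
  congr 2
  field_simp
  ring

lemma integral_gaussianPDF_add_mul_gaussianPDF {v₁ v₂ : ℝ} (hv₁ : 0 < v₁) (hv₂ : 0 < v₂)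
    (m₁ m₂ x : ℝ) :
    ∫ y, gaussianPDF m₁ v₁ (x + y) * gaussianPDF m₂ v₂ y = gaussianPDF (m₁ - m₂) (v₁ + v₂) x := by
  simp_rw [gaussianPDF_add, gaussianPDF_mul_gaussianPDF hv₁ hv₂]
  rw [integral_const_mul, integral_gaussianPDF (by positivity), mul_one]
  unfold gaussianPDF
  ring_nf

lemma sum_sub_sq_eq_sum_sub_mean_sq {ι : Type*} (s : Finset ι) (y : ι → ℝ) {ybar : ℝ}
    (hybar : s.card * ybar = ∑ i ∈ s, y i) (x : ℝ) :
    ∑ i ∈ s, (y i - x) ^ 2 = ∑ i ∈ s, (y i - ybar) ^ 2 + s.card * (ybar - x) ^ 2 := by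
  simp only [sub_sq, Finset.sum_add_distrib, Finset.sum_sub_distrib, ← Finset.sum_mul,
    ← Finset.mul_sum, Finset.sum_const, nsmul_eq_mul, ← hybar]
  ring

lemma exists_prod_gaussianPDF_eq {ι : Type*} (s : Finset ι) (hs : s.Nonempty) {v : ℝ}
    (hv : 0 < v) (y : ι → ℝ) :
    ∃ c > 0, ∀ x, ∏ i ∈ s, gaussianPDF x v (y i) =
      c * gaussianPDF ((s.card : ℝ)⁻¹ * ∑ i ∈ s, y i) (v / s.card) x := by
  have hN : (0 : ℝ) < s.card := by exact_mod_cast hs.card_pos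
  set ybar := (s.card : ℝ)⁻¹ * ∑ i ∈ s, y i
  have hybar : s.card * ybar = ∑ i ∈ s, y i := mul_inv_cancel_left₀ hN.ne' _
  refine ⟨(√(2 * π * v))⁻¹ ^ s.card * √(2 * π * (v / s.card)) *
      exp (-(∑ i ∈ s, (y i - ybar) ^ 2) / (2 * v)), by positivity, fun x => ?_⟩
  have hexponent : ∑ i ∈ s, -(y i - x) ^ 2 / (2 * v) =
      -(∑ i ∈ s, (y i - ybar) ^ 2) / (2 * v) + -(x - ybar) ^ 2 / (2 * (v / s.card)) := by
    rw [← Finset.sum_div, Finset.sum_neg_distrib, sum_sub_sq_eq_sum_sub_mean_sq s y hybar]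
    field_simp
    ring
  have hsqrt : √(2 * π * (v / s.card)) ≠ 0 := by positivity
  unfold gaussianPDF
  rw [Finset.prod_mul_distrib, Finset.prod_const, ← Real.exp_sum, hexponent, Real.exp_add]
  field_simp

theorem biased_data_marginal_delta_smi_posterior_phi_general
    (n m : ℕ) (hn : 1 ≤ n) (hm : 1 ≤ m)
    (σy σz σθ δ : ℝ) (hσy : 0 < σy) (hσz : 0 < σz) (hσθ : 0 < σθ)
    (Y : Fin n → ℝ) (Z : Fin m → ℝ)
    (Ybar : ℝ) (hYbar : Ybar = (n : ℝ)⁻¹ * ∑ i, Y i)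
    (Zbar : ℝ) (hZbar : Zbar = (m : ℝ)⁻¹ * ∑ j, Z j)
    (lam : ℝ)
    (hlam : lam = ((m : ℝ) / σz ^ 2) /
      ((m : ℝ) / σz ^ 2 + (n : ℝ) / (σy ^ 2 + δ ^ 2 + (n : ℝ) * σθ ^ 2)))
    (μδ : ℝ) (hμδ : μδ = lam * Zbar + (1 - lam) * Ybar)
    (σδsq : ℝ) (hσδsq : σδsq = lam * σz ^ 2 / (m : ℝ)) :
    ∃ c : ℝ, 0 < c ∧ ∀ φ : ℝ,
      (∏ j, gaussianPDF φ (σz ^ 2) (Z j)) *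
        (∫ θt : ℝ,
          (∏ i, gaussianPDF (φ + θt) (σy ^ 2 + δ ^ 2) (Y i)) *
            gaussianPDF 0 (σθ ^ 2) θt)
        = c * gaussianPDF μδ σδsq φ := by
  have hn0 : (0 : ℝ) < n := by exact_mod_cast hn
  have hm0 : (0 : ℝ) < m := by exact_mod_cast hm
  obtain ⟨cZ, hcZ, hZ⟩ := exists_prod_gaussianPDF_eq Finset.univ
    ⟨⟨0, hm⟩, Finset.mem_univ _⟩ (pow_pos hσz 2) Z
  have hvy : 0 < σy ^ 2 + δ ^ 2 := by positivity
  obtain ⟨cY, hcY, hY⟩ := exists_prod_gaussianPDF_eq Finset.univ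
    ⟨⟨0, hn⟩, Finset.mem_univ _⟩ hvy Y
  simp only [Finset.card_univ, Fintype.card_fin, ← hZbar, ← hYbar] at hZ hY
  set vZ := σz ^ 2 / m with hvZ_def
  set vY := (σy ^ 2 + δ ^ 2) / n + σθ ^ 2 with hvY_def
  have hvZ : 0 < vZ := by positivity
  have hvY : 0 < vY := by positivity
  have hmean : (Zbar * vY + Ybar * vZ) / (vZ + vY) = μδ := by
    rw [hμδ, hlam, hvZ_def, hvY_def]
    field_simp
    ring
  have hvar : vZ * vY / (vZ + vY) = σδsq := by
    rw [hσδsq, hlam, hvZ_def, hvY_def]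
    field_simp
    ring
  refine ⟨cZ * cY * gaussianPDF Zbar (vZ + vY) Ybar,
    mul_pos (mul_pos hcZ hcY) (gaussianPDF_pos (by positivity) _ _), fun φ => ?_⟩
  calc _ = cZ * gaussianPDF Zbar vZ φ *
        (cY * ∫ θ, gaussianPDF Ybar ((σy ^ 2 + δ ^ 2) / n) (φ + θ) * gaussianPDF 0 (σθ ^ 2) θ) := by
        simp_rw [hZ, hY, mul_assoc, integral_const_mul]
    _ = cZ * cY * (gaussianPDF Zbar vZ φ * gaussianPDF Ybar vY φ) := by
        rw [integral_gaussianPDF_add_mul_gaussianPDF (div_pos hvy hn0) (pow_pos hσθ 2), sub_zero]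
        ring
    _ = _ := by
        rw [gaussianPDF_mul_gaussianPDF hvZ hvY, hmean, hvar]
        ring

/-- Normal biased-data example, marginal δ-SMI posterior for `φ`:
with `λ = (m/σ_z²)/(m/σ_z² + n/(σ_y²+δ²+nσ_θ²))`, `μ_δ = λZ̄+(1−λ)Ȳ` and
`σ_δ² = λσ_z²/m`, there is a constant `c > 0` not depending on `φ` with
`[∏ⱼ gaussianPDF(φ,σ_z²,Zⱼ)]·∫ [∏ᵢ gaussianPDF(φ+θ̃,σ_y²+δ²,Yᵢ)]·gaussianPDF(0,σ_θ²,θ̃) dθ̃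
  = c·gaussianPDF(μ_δ,σ_δ²,φ)` for every `φ`. -/
theorem biased_data_marginal_delta_smi_posterior_phi
    (n m : ℕ) (hn : 1 ≤ n) (hm : 1 ≤ m)
    (σy σz σθ δ : ℝ) (hσy : 0 < σy) (hσz : 0 < σz) (hσθ : 0 < σθ) (hδ : 0 ≤ δ)
    (Y : Fin n → ℝ) (Z : Fin m → ℝ)
    (Ybar : ℝ) (hYbar : Ybar = (n : ℝ)⁻¹ * ∑ i, Y i)
    (Zbar : ℝ) (hZbar : Zbar = (m : ℝ)⁻¹ * ∑ j, Z j)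
    (lam : ℝ)
    (hlam : lam = ((m : ℝ) / σz ^ 2) /
      ((m : ℝ) / σz ^ 2 + (n : ℝ) / (σy ^ 2 + δ ^ 2 + (n : ℝ) * σθ ^ 2)))
    (μδ : ℝ) (hμδ : μδ = lam * Zbar + (1 - lam) * Ybar)
    (σδsq : ℝ) (hσδsq : σδsq = lam * σz ^ 2 / (m : ℝ)) :
    ∃ c : ℝ, 0 < c ∧ ∀ φ : ℝ,
      (∏ j, gaussianPDF φ (σz ^ 2) (Z j)) *
        (∫ θt : ℝ,
          (∏ i, gaussianPDF (φ + θt) (σy ^ 2 + δ ^ 2) (Y i)) *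
            gaussianPDF 0 (σθ ^ 2) θt)
        = c * gaussianPDF μδ σδsq φ :=
  biased_data_marginal_delta_smi_posterior_phi_general n m hn hm σy σz σθ δ hσy hσz hσθ Y Z Ybar
    hYbar Zbar hZbar lam hlam μδ hμδ σδsq hσδsq
end
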